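/- Let q_ν(x) = (-(x+ν))^{ν/2-1} e^{-(x+ν)/2}/(2^{ν/2}Γ(ν/2)) for x < -ν. Then for every x < -ν, 2(x+ν) q_ν(x) = ∫_{x}^{-ν} u q_ν(u) du. -/

import Mathlib

/-!
For `u < -ν` the function
`-2 (u + ν) q_ν(u) = 2 (-(u + ν))^{ν/2} e^{-(u+ν)/2} / (2^{ν/2} Γ(ν/2))`
has derivative `u q_ν(u)`, and it extends continuously by `0` to `u = -ν` because `ν > 0`.
The identity is then the fundamental theorem of calculus on `[x, -ν]`; integrability of
`u q_ν(u)` comes for free, since it has constant sign there.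
-/

open MeasureTheory Real intervalIntegral

/-- Auxiliary (non-probability) density used on `(-∞, -ν)`. -/
noncomputable def qnu (ν : ℝ) (x : ℝ) : ℝ :=
  if x < -ν then (-(x + ν)) ^ (ν / 2 - 1) * Real.exp (-(x + ν) / 2) /
    (2 ^ (ν / 2) * Real.Gamma (ν / 2)) else 0

/-- Equal to `-2 (u + ν) q_ν(u)` for `u < -ν`, but written so that it is continuous up to
`-ν`. -/
noncomputable def qnuPrimitive (ν u : ℝ) : ℝ :=
  2 * (-(u + ν)) ^ (ν / 2) * exp (-(u + ν) / 2) / (2 ^ (ν / 2) * Gamma (ν / 2))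

lemma rpow_eq_rpow_sub_one_mul {x : ℝ} (hx : x ≠ 0) (y : ℝ) : x ^ y = x ^ (y - 1) * x := by
  rw [← rpow_add_one hx, sub_add_cancel]

lemma qnu_of_lt {ν x : ℝ} (hx : x < -ν) :
    qnu ν x = (-(x + ν)) ^ (ν / 2 - 1) * exp (-(x + ν) / 2) / (2 ^ (ν / 2) * Gamma (ν / 2)) :=
  if_pos hx

lemma qnu_nonneg {ν : ℝ} (hν : 0 < ν) (x : ℝ) : 0 ≤ qnu ν x := by
  unfold qnu
  split_ifs with hx
  · have := Gamma_pos_of_pos (half_pos hν)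
    have : 0 ≤ -(x + ν) := by linarith
    positivity
  · exact le_rfl

lemma qnuPrimitive_of_lt {ν u : ℝ} (hu : u < -ν) :
    qnuPrimitive ν u = -2 * (u + ν) * qnu ν u := by
  have hs : -(u + ν) ≠ 0 := by linarith
  rw [qnuPrimitive, qnu_of_lt hu, rpow_eq_rpow_sub_one_mul hs (ν / 2)]
  ring

lemma qnuPrimitive_neg_self {ν : ℝ} (hν : 0 < ν) : qnuPrimitive ν (-ν) = 0 := by
  rw [qnuPrimitive, neg_add_cancel, neg_zero, zero_rpow (half_pos hν).ne']
  simp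

lemma continuousOn_qnuPrimitive {ν : ℝ} (hν : 0 ≤ ν) :
    ContinuousOn (qnuPrimitive ν) (Set.Iic (-ν)) := by
  unfold qnuPrimitive
  have : ContinuousOn (fun u : ℝ ↦ (-(u + ν)) ^ (ν / 2)) (Set.Iic (-ν)) :=
    (continuousOn_id.add continuousOn_const).neg.rpow_const fun _ _ ↦ Or.inr (by positivity)
  fun_prop

lemma hasDerivAt_qnuPrimitive {ν u : ℝ} (hu : u < -ν) :
    HasDerivAt (qnuPrimitive ν) (u * qnu ν u) u := by
  have hs : 0 < -(u + ν) := by linarith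
  have hshift : HasDerivAt (fun u : ℝ ↦ -(u + ν)) (-1) u :=
    ((hasDerivAt_id u).add_const ν).neg
  have hpow := hshift.rpow_const (p := ν / 2) (Or.inl hs.ne')
  have hexp := (hshift.div_const 2).exp
  refine (((hpow.const_mul 2).mul hexp).div_const
    (2 ^ (ν / 2) * Gamma (ν / 2))).congr_deriv ?_
  rw [qnu_of_lt hu, rpow_eq_rpow_sub_one_mul hs.ne' (ν / 2)]
  ring

lemma intervalIntegrable_mul_qnu {ν x : ℝ} (hν : 0 < ν) (hx : x ≤ -ν) :
    IntervalIntegrable (fun u ↦ u * qnu ν u) volume x (-ν) := by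
  have hneg : IntervalIntegrable (fun u ↦ -(u * qnu ν u)) volume x (-ν) := by
    refine intervalIntegrable_deriv_of_nonneg (g := fun u ↦ -qnuPrimitive ν u) ?_ ?_ ?_
    · exact ((continuousOn_qnuPrimitive hν.le).mono (Set.uIcc_of_le hx ▸ fun _ hu ↦ hu.2)).neg
    · intro u hu
      rw [min_eq_left hx, max_eq_right hx] at hu
      exact (hasDerivAt_qnuPrimitive hu.2).neg
    · intro u hu
      rw [min_eq_left hx, max_eq_right hx] at hu
      have : u ≤ 0 := by linarith [hu.2]
      exact neg_nonneg.2 (mul_nonpos_of_nonpos_of_nonneg this (qnu_nonneg hν u))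
  simpa only [Pi.neg_def, neg_neg] using hneg.neg

lemma integral_mul_qnu {ν x : ℝ} (hν : 0 < ν) (hx : x ≤ -ν) :
    ∫ u in x..-ν, u * qnu ν u = -qnuPrimitive ν x := by
  rw [integral_eq_sub_of_hasDerivAt_of_le hx
    ((continuousOn_qnuPrimitive hν.le).mono fun _ hu ↦ hu.2)
    (fun u hu ↦ hasDerivAt_qnuPrimitive hu.2) (intervalIntegrable_mul_qnu hν hx),
    qnuPrimitive_neg_self hν, zero_sub]

/-- Fundamental identity `2(x+ν) q_ν(x) = ∫_x^{-ν} u q_ν(u) du` for `x < -ν`. -/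
theorem qnu_fundamental_identity (ν : ℝ) (hν : 0 < ν) (x : ℝ) (hx : x < -ν) :
    2 * (x + ν) * qnu ν x = ∫ u in x..(-ν), u * qnu ν u := by
  rw [integral_mul_qnu hν hx.le, qnuPrimitive_of_lt hx]
  ring
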